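/- Let E = ⊕_{n∈ℕ} E^n be a copresimplicial complex vector space with cofaces f_k satisfying f_ℓ f_k = f_k f_{ℓ−1} for k < ℓ, and let q be a primitive N-th root of unity (N ≥ 2). Define d̃_q(x) = ∑_{k=0}^{n+1} q^k f_k(x) for x ∈ E^n. Then (d̃_q)^N = 0. -/
import Mathlib


/-- Iterated composition of a degree-one family of linear maps. -/
def opIter {E : ℕ → Type*} [∀ n, AddCommGroup (E n)] [∀ n, Module ℂ (E n)]
    (d : ∀ n, E n →ₗ[ℂ] E (n + 1)) : ∀ (m n : ℕ), E n →ₗ[ℂ] E (n + m)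
  | 0, _ => LinearMap.id
  | m + 1, n => (d (n + m)).comp (opIter d m n)

open Finset

section Aux

variable {E : ℕ → Type*} [∀ n, AddCommGroup (E n)] [∀ n, Module ℂ (E n)]
variable (f : ∀ n, ℕ → (E n →ₗ[ℂ] E (n + 1))) (q : ℂ)

/-- Normal form operators: sum over weakly increasing words
`L ≤ b₁ ≤ ⋯ ≤ b_m ≤ n+1` of `q^{Σ b} f_{b₁} ∘ ⋯ ∘ f_{b_m}`
(the outermost, i.e. last applied, coface has the smallest index `b₁`). -/
def Wop : ∀ (m n _L : ℕ), E n →ₗ[ℂ] E (n + m)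
  | 0, _, _ => LinearMap.id
  | m + 1, n, L => ∑ k ∈ Finset.Icc L (n + 1), q ^ k • (f (n + m) k).comp (Wop m n k)

/-- Truncated q-differential `∑_{l=L}^{r+1} q^l f_l` on `E r`. -/
def Dop (r L : ℕ) : E r →ₗ[ℂ] E (r + 1) := ∑ l ∈ Finset.Icc L (r + 1), q ^ l • f r l

lemma comp_sum_eq {ι : Type*} (s : Finset ι) {a b c : ℕ}
    (g : E b →ₗ[ℂ] E c) (h : ι → (E a →ₗ[ℂ] E b)) :
    g.comp (∑ i ∈ s, h i) = ∑ i ∈ s, g.comp (h i) := by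
  ext x; simp [LinearMap.sum_apply, map_sum]

lemma sum_comp_eq {ι : Type*} (s : Finset ι) {a b c : ℕ}
    (g : ι → (E b →ₗ[ℂ] E c)) (h : E a →ₗ[ℂ] E b) :
    (∑ i ∈ s, g i).comp h = ∑ i ∈ s, (g i).comp h := by
  ext x; simp [LinearMap.sum_apply]

/-- Commutation of the truncated differential across a single coface. -/
lemma Dop_comp_f
    (hf : ∀ n k l, k < l → l ≤ n + 2 →
      (f (n + 1) l).comp (f n k) = (f (n + 1) k).comp (f n (l - 1)))
    (r k L : ℕ) (hLk : L ≤ k) (hk : k ≤ r + 1) :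
    (Dop f q (r + 1) L).comp (f r k)
      = (∑ l ∈ Finset.Icc L k, q ^ l • ((f (r + 1) l).comp (f r k)))
        + q • ((f (r + 1) k).comp (Dop f q r k)) := by
  have hsplit : Finset.Icc L (r + 2) = Finset.Icc L k ∪ Finset.Ioc k (r + 2) := by
    ext x; simp only [Finset.mem_Icc, Finset.mem_union, Finset.mem_Ioc]; omega
  have hdisj : Disjoint (Finset.Icc L k) (Finset.Ioc k (r + 2)) := by
    rw [Finset.disjoint_left]
    intro x hx hx'
    simp only [Finset.mem_Icc] at hx
    simp only [Finset.mem_Ioc] at hx'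
    omega
  rw [Dop, sum_comp_eq, hsplit, Finset.sum_union hdisj]
  have h1 : ∑ l ∈ Finset.Icc L k, (q ^ l • f (r + 1) l).comp (f r k)
      = ∑ l ∈ Finset.Icc L k, q ^ l • ((f (r + 1) l).comp (f r k)) := by
    refine Finset.sum_congr rfl fun l _ => ?_
    rw [LinearMap.smul_comp]
  have h2 : ∑ l ∈ Finset.Ioc k (r + 2), (q ^ l • f (r + 1) l).comp (f r k)
      = q • ((f (r + 1) k).comp (Dop f q r k)) := by
    have hmap : ∑ l ∈ Finset.Ioc k (r + 2), (q ^ l • f (r + 1) l).comp (f r k)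
        = ∑ l ∈ Finset.Icc k (r + 1), q ^ (l + 1) • ((f (r + 1) k).comp (f r l)) := by
      refine Finset.sum_nbij' (fun l => l - 1) (fun l => l + 1) ?_ ?_ ?_ ?_ ?_
      · intro a ha; simp only [Finset.mem_Ioc] at ha; simp only [Finset.mem_Icc]; omega
      · intro a ha; simp only [Finset.mem_Icc] at ha; simp only [Finset.mem_Ioc]; omega
      · intro a ha; simp only [Finset.mem_Ioc] at ha; show a - 1 + 1 = a; omega
      · intro a _; show a + 1 - 1 = a; omega
      · intro l hl
        simp only [Finset.mem_Ioc] at hl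
        rw [LinearMap.smul_comp, hf r k l (by omega) (by omega),
          show l - 1 + 1 = l from by omega]
    rw [hmap, Dop, comp_sum_eq, Finset.smul_sum]
    refine Finset.sum_congr rfl fun l hl => ?_
    rw [LinearMap.comp_smul, smul_smul, pow_succ, mul_comm]
  rw [h1, h2]

/-- Key insertion lemma: `D^{≥L} ∘ W_m^{≥L} = [m+1]_q • W_{m+1}^{≥L}`. -/
lemma key
    (hf : ∀ n k l, k < l → l ≤ n + 2 →
      (f (n + 1) l).comp (f n k) = (f (n + 1) k).comp (f n (l - 1)))
    (m : ℕ) : ∀ (n L : ℕ),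
    (Dop f q (n + m) L).comp (Wop f q m n L)
      = (∑ j ∈ Finset.range (m + 1), q ^ j) • Wop f q (m + 1) n L := by
  induction m with
  | zero =>
    intro n L
    show (Dop f q n L).comp LinearMap.id = _
    rw [Finset.range_one]
    simp only [Finset.sum_singleton, pow_zero, one_smul, LinearMap.comp_id]
    show Dop f q n L = ∑ k ∈ Finset.Icc L (n + 1), q ^ k • (f n k).comp LinearMap.id
    rw [Dop]
    refine Finset.sum_congr rfl fun k _ => ?_
    rw [LinearMap.comp_id]
  | succ m ih =>
    intro n L
    show (Dop f q (n + m + 1) L).comp (Wop f q (m + 1) n L) = _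
    rw [show Wop f q (m + 1) n L
        = ∑ k ∈ Finset.Icc L (n + 1), q ^ k • (f (n + m) k).comp (Wop f q m n k) from rfl]
    rw [comp_sum_eq]
    have step : ∀ k ∈ Finset.Icc L (n + 1),
        (Dop f q (n + m + 1) L).comp (q ^ k • (f (n + m) k).comp (Wop f q m n k))
          = (∑ l ∈ Finset.Icc L k, (q ^ k * q ^ l) •
                ((f (n + m + 1) l).comp ((f (n + m) k).comp (Wop f q m n k))))
            + ((q * (∑ j ∈ Finset.range (m + 1), q ^ j) * q ^ k) •
                ((f (n + m + 1) k).comp (Wop f q (m + 1) n k))) := by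
      intro k hk
      simp only [Finset.mem_Icc] at hk
      rw [LinearMap.comp_smul, ← LinearMap.comp_assoc]
      rw [Dop_comp_f f q hf (n + m) k L hk.1 (by omega)]
      rw [LinearMap.add_comp, sum_comp_eq, smul_add, Finset.smul_sum]
      congr 1
      · refine Finset.sum_congr rfl fun l hl => ?_
        rw [LinearMap.smul_comp, LinearMap.comp_assoc, smul_smul]
      · rw [LinearMap.smul_comp, LinearMap.comp_assoc, ih n k, LinearMap.comp_smul,
          smul_smul, smul_smul]
        congr 1
        ring
    rw [Finset.sum_congr rfl step, Finset.sum_add_distrib]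
    have hterm2 : ∑ k ∈ Finset.Icc L (n + 1),
        (q * (∑ j ∈ Finset.range (m + 1), q ^ j) * q ^ k) •
          ((f (n + m + 1) k).comp (Wop f q (m + 1) n k))
        = (q * (∑ j ∈ Finset.range (m + 1), q ^ j)) • Wop f q (m + 2) n L := by
      have expand : ∀ k ∈ Finset.Icc L (n + 1),
          (q * (∑ j ∈ Finset.range (m + 1), q ^ j) * q ^ k) •
            ((f (n + m + 1) k).comp (Wop f q (m + 1) n k))
          = (q * (∑ j ∈ Finset.range (m + 1), q ^ j)) •
              (q ^ k • ((f (n + m + 1) k).comp (Wop f q (m + 1) n k))) := by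
        intro k _
        rw [mul_smul]
      rw [Finset.sum_congr rfl expand, ← Finset.smul_sum]
      rfl
    have hterm1 : ∑ k ∈ Finset.Icc L (n + 1), ∑ l ∈ Finset.Icc L k, (q ^ k * q ^ l) •
          ((f (n + m + 1) l).comp ((f (n + m) k).comp (Wop f q m n k)))
        = Wop f q (m + 2) n L := by
      rw [Finset.sum_comm' (t' := Finset.Icc L (n + 1))
        (s' := fun l => Finset.Icc l (n + 1)) (fun k l => by
          simp only [Finset.mem_Icc]; constructor <;> (intro h; omega))]
      rw [show Wop f q (m + 2) n L
          = ∑ l ∈ Finset.Icc L (n + 1), q ^ l •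
              (f (n + m + 1) l).comp (Wop f q (m + 1) n l) from rfl]
      refine Finset.sum_congr rfl fun l hl => ?_
      rw [show Wop f q (m + 1) n l
          = ∑ k ∈ Finset.Icc l (n + 1), q ^ k • (f (n + m) k).comp (Wop f q m n k) from rfl]
      rw [comp_sum_eq, Finset.smul_sum]
      refine Finset.sum_congr rfl fun k hk => ?_
      rw [LinearMap.comp_smul, smul_smul, mul_comm]
    rw [hterm1, hterm2]
    rw [geom_sum_succ (x := q) (n := m + 1)]
    rw [add_smul, one_smul]
    exact add_comm _ _

end Aux

/-- for a copresimplicial complex vector space `(E^n)` with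
cofaces satisfying `f_ℓ f_k = f_k f_(ℓ-1)` for `k < ℓ`, and `q` a primitive
`N`-th root of unity (`N ≥ 2`), the operator
`d̃_q(x) = ∑_{k=0}^{n+1} q^k f_k(x)` satisfies `(d̃_q)^N = 0`. -/
theorem copresimplicial_dtilde_pow_N_eq_zero
    (E : ℕ → Type*) [∀ n, AddCommGroup (E n)] [∀ n, Module ℂ (E n)]
    (f : ∀ n, ℕ → (E n →ₗ[ℂ] E (n + 1)))
    (hf : ∀ n k l, k < l → l ≤ n + 2 →
      (f (n + 1) l).comp (f n k) = (f (n + 1) k).comp (f n (l - 1)))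
    (N : ℕ) (hN : 2 ≤ N) (q : ℂ) (hq : IsPrimitiveRoot q N) :
    ∀ n, opIter (fun n => ∑ k ∈ Finset.range (n + 2), q ^ k • f n k) N n = 0 := by
  intro n
  set d : ∀ r, E r →ₗ[ℂ] E (r + 1) := fun r => ∑ k ∈ Finset.range (r + 2), q ^ k • f r k
    with hd
  have hdD : ∀ r, d r = Dop f q r 0 := by
    intro r
    rw [hd, Dop]
    apply Finset.sum_congr _ (fun k _ => rfl)
    ext x
    simp only [Finset.mem_range, Finset.mem_Icc]
    omega
  have main : ∀ m, opIter d m n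
      = (∏ j ∈ Finset.range m, (∑ i ∈ Finset.range (j + 1), q ^ i)) • Wop f q m n 0 := by
    intro m
    induction m with
    | zero => simp [opIter, Wop]
    | succ m ih =>
      show (d (n + m)).comp (opIter d m n) = _
      rw [ih, LinearMap.comp_smul, hdD, key f q hf m n 0, smul_smul,
        Finset.prod_range_succ]
  have hzero : (∑ i ∈ Finset.range N, q ^ i) = 0 := hq.geom_sum_eq_zero (by omega)
  have hprod : (∏ j ∈ Finset.range N, (∑ i ∈ Finset.range (j + 1), q ^ i)) = 0 := by
    apply Finset.prod_eq_zero (i := N - 1) (Finset.mem_range.mpr (by omega))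
    rw [Nat.sub_add_cancel (by omega)]
    exact hzero
  rw [main N, hprod, zero_smul]
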